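/- For any sequence of real numbers y₀, …, y_{n−1} with 0 ≤ y_k ≤ Y_k where Y_k := max{1, Σ_{i<k} y_i}, one has Σ_{k=0}^{n−1} y_k/√(Y_k) ≤ (√2 + 1)·√(Y_n). -/

import Mathlib

/-!
Write `S_n = ∑_{i<n} y_i` and `Y_n = max 1 S_n`. By induction one shows the stronger bound
`∑_{k<n} y_k / √Y_k ≤ √2 √Y_n + S_n / √Y_n`, from which the theorem follows since `S_n ≤ Y_n`.
The inductive step reduces to `√2 √Y + s / √Y ≤ √2 √s + √s` for `Y ≤ s ≤ 2Y`, and after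
multiplying by `√Y` this is `(√s - √Y)(√2 √Y - √s) ≥ 0`.
-/

open Finset

lemma sqrt_two_mul_sqrt_add_div_sqrt_le {Y s : ℝ} (hY : 0 < Y) (hYs : Y ≤ s) (hs : s ≤ 2 * Y) :
    √2 * √Y + s / √Y ≤ √2 * √s + s / √s := by
  set a := √Y
  set b := √s
  have ha : 0 < a := Real.sqrt_pos.mpr hY
  have hab : a ≤ b := Real.sqrt_le_sqrt hYs
  have hba : b ≤ √2 * a := by
    rw [← Real.sqrt_mul zero_le_two]
    exact Real.sqrt_le_sqrt hs
  have hb2 : b ^ 2 = s := Real.sq_sqrt (hY.le.trans hYs)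
  have hdiff : √2 * b + s / b - (√2 * a + s / a) = (b - a) * (√2 * a - b) / a := by
    rw [← hb2]
    field_simp
    ring
  rw [← sub_nonneg, hdiff]
  exact div_nonneg (mul_nonneg (sub_nonneg.mpr hab) (sub_nonneg.mpr hba)) ha.le

lemma sqrt_two_mul_sqrt_max_add_div_le {S y : ℝ} (hy : 0 ≤ y) (hyS : y ≤ max 1 S) :
    √2 * √(max 1 S) + (S + y) / √(max 1 S) ≤
      √2 * √(max 1 (S + y)) + (S + y) / √(max 1 (S + y)) := by
  rcases le_or_gt (S + y) 1 with hsum | hsum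
  · rw [max_eq_left hsum, max_eq_left (by linarith)]
  · rw [max_eq_right hsum.le]
    refine sqrt_two_mul_sqrt_add_div_sqrt_le (by positivity) ?_ (by linarith [le_max_right 1 S])
    exact max_le hsum.le (by linarith)

lemma sum_div_sqrt_le_sqrt_two_mul_add_div (n : ℕ) (y : ℕ → ℝ)
    (h : ∀ k < n, 0 ≤ y k ∧ y k ≤ max 1 (∑ i ∈ range k, y i)) :
    ∑ k ∈ range n, y k / √(max 1 (∑ i ∈ range k, y i)) ≤
      √2 * √(max 1 (∑ i ∈ range n, y i)) +
        (∑ i ∈ range n, y i) / √(max 1 (∑ i ∈ range n, y i)) := by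
  induction n with
  | zero => simp
  | succ n ih =>
    have h' : ∀ k < n, 0 ≤ y k ∧ y k ≤ max 1 (∑ i ∈ range k, y i) :=
      fun k hk => h k (Nat.lt_succ_of_lt hk)
    obtain ⟨hy, hyS⟩ := h n n.lt_succ_self
    calc ∑ k ∈ range (n + 1), y k / √(max 1 (∑ i ∈ range k, y i))
        ≤ √2 * √(max 1 (∑ i ∈ range n, y i)) +
            (∑ i ∈ range n, y i) / √(max 1 (∑ i ∈ range n, y i)) +
            y n / √(max 1 (∑ i ∈ range n, y i)) := by
          rw [sum_range_succ]
          exact add_le_add_left (ih h') _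
      _ = √2 * √(max 1 (∑ i ∈ range n, y i)) +
            (∑ i ∈ range n, y i + y n) / √(max 1 (∑ i ∈ range n, y i)) := by
          rw [add_div, add_assoc]
      _ ≤ _ := by
          rw [sum_range_succ]
          exact sqrt_two_mul_sqrt_max_add_div_le hy hyS

/-- Lemma 19 of Jaksch et al.: for `0 ≤ y_k ≤ Y_k` with `Y_k = max {1, ∑_{i<k} y_i}`,
`∑_{k<n} y_k / √(Y_k) ≤ (√2 + 1) √(Y_n)`. -/
theorem sum_div_sqrt_le (n : ℕ) (y : ℕ → ℝ)
    (h : ∀ k < n, 0 ≤ y k ∧ y k ≤ max 1 (∑ i ∈ Finset.range k, y i)) :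
    ∑ k ∈ Finset.range n, y k / Real.sqrt (max 1 (∑ i ∈ Finset.range k, y i)) ≤
      (Real.sqrt 2 + 1) * Real.sqrt (max 1 (∑ i ∈ Finset.range n, y i)) := by
  set Y := max 1 (∑ i ∈ range n, y i)
  have hY : 0 < √Y := Real.sqrt_pos.mpr (lt_max_of_lt_left one_pos)
  have hSY : (∑ i ∈ range n, y i) / √Y ≤ √Y := by
    rw [div_le_iff₀ hY, Real.mul_self_sqrt (le_trans zero_le_one (le_max_left _ _))]
    exact le_max_right _ _
  calc _ ≤ √2 * √Y + (∑ i ∈ range n, y i) / √Y := sum_div_sqrt_le_sqrt_two_mul_add_div n y h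
    _ ≤ (√2 + 1) * √Y := by linarith
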